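/- arXiv:math/0406079 — 2 statements merged into one kernel-verified Lean document; each statement's English description precedes it below -/
import Mathlib

section
/- For 0 < λ < 1, the function ψ(z) = z(1-λ)²/((√λ·z+1)(z+√λ)) is injective on the open upper half plane {z ∈ ℂ : Im z > 0}. -/
open Complex

/-- For `0 < l < 1`, `ψ(z) = z(1-l)²/((√l·z+1)(z+√l))` is injective on the open
upper half plane. -/
theorem psi_injOn_upperHalfPlane (l : ℝ) (hl0 : 0 < l) (hl1 : l < 1) :
    Set.InjOn
      (fun z : ℂ => z * ((1 : ℂ) - (l : ℂ))^2 /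
        (((Real.sqrt l : ℂ) * z + 1) * (z + (Real.sqrt l : ℂ))))
      {z : ℂ | 0 < z.im} := by
  intro z hz w hw h
  simp only [Set.mem_setOf_eq] at hz hw
  set s : ℝ := Real.sqrt l with hs
  have hspos : 0 < s := Real.sqrt_pos.mpr hl0
  have h1 : ((s : ℂ) * z + 1) ≠ 0 := by
    intro hc
    have : ((s : ℂ) * z + 1).im = 0 := by rw [hc]; simp
    simp [Complex.add_im, Complex.mul_im] at this
    rcases this with h' | h' <;> linarith
  have h2 : (z + (s : ℂ)) ≠ 0 := by
    intro hc
    have : (z + (s : ℂ)).im = 0 := by rw [hc]; simp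
    simp at this
    linarith
  have h3 : ((s : ℂ) * w + 1) ≠ 0 := by
    intro hc
    have : ((s : ℂ) * w + 1).im = 0 := by rw [hc]; simp
    simp [Complex.add_im, Complex.mul_im] at this
    rcases this with h' | h' <;> linarith
  have h4 : (w + (s : ℂ)) ≠ 0 := by
    intro hc
    have : (w + (s : ℂ)).im = 0 := by rw [hc]; simp
    simp at this
    linarith
  have hl : ((1 : ℂ) - (l : ℂ)) ≠ 0 := by
    intro hc
    have : ((1 : ℂ) - (l : ℂ)).re = 0 := by rw [hc]; simp
    simp at this
    linarith
  simp only at h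
  rw [div_eq_div_iff (mul_ne_zero h1 h2) (mul_ne_zero h3 h4)] at h
  have key : (w - z) * (z * w - 1) * ((s : ℂ) * ((1:ℂ) - (l:ℂ))^2) = 0 := by
    linear_combination h
  rcases mul_eq_zero.mp key with hk | hk
  · rcases mul_eq_zero.mp hk with hk | hk
    · exact (sub_eq_zero.mp hk).symm
    · exfalso
      have hzw : z * w = 1 := by linear_combination hk
      have : (z * w).im = 0 := by rw [hzw]; simp
      rw [Complex.mul_im] at this
      -- z*w = 1 and both in UHP: contradiction via im
      -- w = 1/z, im(1/z) = -im z/|z|² < 0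
      have hz0 : z ≠ 0 := by
        intro hc; rw [hc, zero_mul] at hzw; exact one_ne_zero hzw.symm
      have hw' : w = z⁻¹ := by
        field_simp
        linear_combination hzw
      have : w.im = -z.im / Complex.normSq z := by
        rw [hw', Complex.inv_im]
      have hns : 0 < Complex.normSq z := Complex.normSq_pos.mpr hz0
      rw [this] at hw
      have : -z.im / Complex.normSq z < 0 := div_neg_of_neg_of_pos (by linarith) hns
      linarith
  · exfalso
    rcases mul_eq_zero.mp hk with hk | hk
    · exact (by positivity : (0:ℝ) < s).ne' (by exact_mod_cast Complex.ofReal_eq_zero.mp hk) |>.elim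
    · exact hl (pow_eq_zero_iff (n := 2) (by norm_num) |>.mp hk)
end

section
/- For 0 < λ < 1 and z ∈ ℂ with z ≠ -√λ, z ≠ -1/√λ, the value ψ(z) = z(1-λ)²/((√λ·z+1)(z+√λ)) is real if and only if z is real or |z| = 1. -/
open Complex ComplexConjugate

/-! Writing `w / D = w * conj D / ‖D‖²`, the sign of `Im ψ(z)` is that of
`Im (z * conj ((√l z + 1)(z + √l))) = √l · Im z · (1 - |z|²)`. -/

namespace Complex

/-- Both sides also hold when `D = 0`, since then `w / D = 0`. -/
theorem im_div_eq_zero_iff_im_mul_conj (w D : ℂ) :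
    (w / D).im = 0 ↔ (w * conj D).im = 0 := by
  rcases eq_or_ne D 0 with rfl | hD
  · simp
  rw [div_eq_mul_inv, inv_def, ← mul_assoc, im_mul_ofReal, mul_eq_zero,
    or_iff_left (inv_ne_zero (normSq_pos.2 hD).ne')]

theorem im_mul_conj_mul_add_one_mul_add (c s : ℝ) (z : ℂ) :
    (z * c * conj ((s * z + 1) * (z + s))).im = c * s * z.im * (1 - normSq z) := by
  simp only [map_mul, map_add, map_one, conj_ofReal, mul_im, mul_re, add_re, add_im,
    conj_re, conj_im, ofReal_re, ofReal_im, one_re, one_im, normSq_apply]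
  ring

end Complex

theorem psi_real_iff_general (l : ℝ) (hl0 : 0 < l) (hl1 : l < 1) (z : ℂ) :
    (z * ((1 : ℂ) - (l : ℂ))^2 /
        (((Real.sqrt l : ℂ) * z + 1) * (z + (Real.sqrt l : ℂ)))).im = 0
      ↔ z.im = 0 ∨ ‖z‖ = 1 := by
  have hc : (1 - l) ^ 2 ≠ 0 := pow_ne_zero 2 (sub_ne_zero.2 hl1.ne')
  have hs : Real.sqrt l ≠ 0 := (Real.sqrt_pos.2 hl0).ne'
  have hnorm : normSq z = 1 ↔ ‖z‖ = 1 := by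
    rw [normSq_eq_norm_sq, pow_eq_one_iff_of_nonneg (norm_nonneg z) two_ne_zero]
  have hcast : ((1 : ℂ) - l) ^ 2 = ((1 - l) ^ 2 : ℝ) := by push_cast; rfl
  rw [hcast, im_div_eq_zero_iff_im_mul_conj, im_mul_conj_mul_add_one_mul_add,
    mul_eq_zero, mul_eq_zero, mul_eq_zero, sub_eq_zero, eq_comm (a := (1 : ℝ)), hnorm]
  simp only [hc, hs, false_or]

/-- For `0 < l < 1`, `ψ(z) = z(1-l)²/((√l·z+1)(z+√l))` is real iff `z` is real
or `|z| = 1`. -/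
theorem psi_real_iff (l : ℝ) (hl0 : 0 < l) (hl1 : l < 1) (z : ℂ)
    (hz1 : z ≠ -(Real.sqrt l : ℂ)) (hz2 : z ≠ -(1 / (Real.sqrt l : ℂ))) :
    (z * ((1 : ℂ) - (l : ℂ))^2 /
        (((Real.sqrt l : ℂ) * z + 1) * (z + (Real.sqrt l : ℂ)))).im = 0
      ↔ z.im = 0 ∨ ‖z‖ = 1 :=
  psi_real_iff_general l hl0 hl1 z
end
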